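/- (Proposition 3.4) For a game option (Y,X,X'), the set Z^a_0 produced by the seller's backward construction equals the set of initial endowments of hedging strategies for the seller: Z^a_0 = { y_0 : (σ,y) ∈ T × Φ and (σ,y) hedges (Y,X,X') for the seller }. -/
import Mathlib


open Pointwise
open scoped MeasureTheory

noncomputable section

/-- Euclidean dot product on `Fin d → ℝ`. -/
def dotp {d : ℕ} (x y : Fin d → ℝ) : ℝ := ∑ i, x i * y i

/-- The `i`-th canonical basis vector of `ℝ^d`. -/
def eVec {d : ℕ} (i : Fin d) : Fin d → ℝ := Pi.single i 1

/-- The solvency cone determined by a matrix of exchange rates: the convex cone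
generated by the canonical basis vectors `e^i` and the vectors `π^{ij} e^i − e^j`. -/
def solvencyCone {d : ℕ} (π : Fin d → Fin d → ℝ) : Set (Fin d → ℝ) :=
  {x | ∃ a : Fin d → ℝ, ∃ b : Fin d → Fin d → ℝ,
    (∀ i, 0 ≤ a i) ∧ (∀ i j, 0 ≤ b i j) ∧
    x = (∑ i, a i • eVec i) + ∑ i, ∑ j, b i j • (π i j • eVec i - eVec j)}

/-- Positive polar of a set in `ℝ^d`. -/
def posPolar {d : ℕ} (A : Set (Fin d → ℝ)) : Set (Fin d → ℝ) :=
  {x | ∀ y ∈ A, 0 ≤ dotp x y}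

/-- A (closed) polyhedron: a finite intersection of closed half-spaces. -/
def IsPolyhedron {d : ℕ} (A : Set (Fin d → ℝ)) : Prop :=
  ∃ (n : ℕ) (a : Fin n → Fin d → ℝ) (b : Fin n → ℝ),
    A = {x | ∀ k, dotp (a k) x ≤ b k}

/-- A finite union of nonempty (closed) polyhedra. -/
def FinUnionPoly {d : ℕ} (A : Set (Fin d → ℝ)) : Prop :=
  ∃ (n : ℕ) (Q : Fin n → Set (Fin d → ℝ)),
    (∀ k, IsPolyhedron (Q k) ∧ (Q k).Nonempty) ∧ A = ⋃ k, Q k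

/-- The atom of the σ-algebra `m` containing `ω`. -/
def atomOf {Ω : Type*} (m : MeasurableSpace Ω) (ω : Ω) : Set Ω :=
  {ω' | ∀ A : Set Ω, MeasurableSet[m] A → ω ∈ A → ω' ∈ A}

variable {Ω : Type*}

/-- A stopping time with values in `0,…,T`. -/
def IsStoppingTime (F : ℕ → MeasurableSpace Ω) (T : ℕ) (τ : Ω → ℕ) : Prop :=
  (∀ ω, τ ω ≤ T) ∧ ∀ t, MeasurableSet[F t] {ω | τ ω ≤ t}

/-- A randomised stopping time: an adapted nonnegative process with `Σ_{t=0}^T χ_t = 1`. -/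
def IsRandomisedST [Fintype Ω] (F : ℕ → MeasurableSpace Ω) (T : ℕ) (χ : ℕ → Ω → ℝ) : Prop :=
  (∀ t, t ≤ T → Measurable[F t] (χ t)) ∧ (∀ t ω, t ≤ T → 0 ≤ χ t ω) ∧
  ∀ ω, ∑ t ∈ Finset.range (T + 1), χ t ω = 1

/-- `χ*_t = Σ_{s=t}^T χ_s`. -/
def chiStar (T : ℕ) (χ : ℕ → Ω → ℝ) (t : ℕ) (ω : Ω) : ℝ := ∑ s ∈ Finset.Icc t T, χ s ω

/-- The truncated randomised stopping time `χ ∧ σ`,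
`(χ∧σ)_t = χ_t 1_{t<σ} + χ*_t 1_{t=σ}`. -/
def trunc (T : ℕ) (χ : ℕ → Ω → ℝ) (σ : Ω → ℕ) (t : ℕ) (ω : Ω) : ℝ :=
  if t < σ ω then χ t ω else if t = σ ω then chiStar T χ t ω else 0

/-- The value `A_χ = Σ_{t=0}^T χ_t A_t` of an (adapted real) process at a randomised
stopping time. -/
def valAt (T : ℕ) (χ : ℕ → Ω → ℝ) (A : ℕ → Ω → ℝ) (ω : Ω) : ℝ :=
  ∑ t ∈ Finset.range (T + 1), χ t ω * A t ω

/-- Expectation with respect to a probability `p` on a finite space. -/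
def expect [Fintype Ω] (p : Ω → ℝ) (f : Ω → ℝ) : ℝ := ∑ ω, p ω * f ω

/-- The game option payoff
`Q_{st} = Y_t 1_{s>t} + X_s 1_{s<t} + X'_s 1_{s=t}`. -/
def payoffQ {d : ℕ} (Y X X' : ℕ → Ω → Fin d → ℝ) (s t : ℕ) (ω : Ω) : Fin d → ℝ :=
  if t < s then Y t ω else if s < t then X s ω else X' s ω

/-- The auxiliary payoff
`H_{st} = Y_t 1_{s>t} + X_s 1_{s=t<T} + X'_s 1_{s=t=T}`. -/
def payoffH {d : ℕ} (T : ℕ) (Y X X' : ℕ → Ω → Fin d → ℝ) (s t : ℕ) (ω : Ω) : Fin d → ℝ :=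
  if t < s then Y t ω
  else if s = t ∧ s < T then X s ω
  else if s = t ∧ s = T then X' s ω
  else 0

/-- `(Q_{σ·}·S_{σ∧·})_χ = Σ_{t=0}^{σ−1} χ_t Y_t·S_t + χ*_{σ+1} X_σ·S_σ + χ_σ X'_σ·S_σ`. -/
def sellerValue {d : ℕ} (T : ℕ) (Y X X' S : ℕ → Ω → Fin d → ℝ) (σ : Ω → ℕ)
    (χ : ℕ → Ω → ℝ) (ω : Ω) : ℝ :=
  (∑ t ∈ Finset.range (σ ω), χ t ω * dotp (Y t ω) (S t ω))
    + chiStar T χ (σ ω + 1) ω * dotp (X (σ ω) ω) (S (σ ω) ω)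
    + χ (σ ω) ω * dotp (X' (σ ω) ω) (S (σ ω) ω)

/-- `(Q_{·τ}·S_{·∧τ})_χ = Σ_{s=0}^{τ−1} χ_s X_s·S_s + χ*_{τ+1} Y_τ·S_τ + χ_τ X'_τ·S_τ`. -/
def buyerValue {d : ℕ} (T : ℕ) (Y X X' S : ℕ → Ω → Fin d → ℝ) (τ : Ω → ℕ)
    (χ : ℕ → Ω → ℝ) (ω : Ω) : ℝ :=
  (∑ s ∈ Finset.range (τ ω), χ s ω * dotp (X s ω) (S s ω))
    + chiStar T χ (τ ω + 1) ω * dotp (Y (τ ω) ω) (S (τ ω) ω)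
    + χ (τ ω) ω * dotp (X' (τ ω) ω) (S (τ ω) ω)

/-- The randomised stopping time `χ'_t = χ_t 1_{t<σ} + χ*_σ 1_{t=T}`. -/
def chiPrime (T : ℕ) (χ : ℕ → Ω → ℝ) (σ : Ω → ℕ) (t : ℕ) (ω : Ω) : ℝ :=
  if t < σ ω then χ t ω else if t = T then chiStar T χ (σ ω) ω else 0

/-- The Kabanov discrete-time currency model with proportional transaction costs on a
finite probability space. -/
structure Market (Ω : Type*) [Fintype Ω] (d T : ℕ) where
  F : ℕ → MeasurableSpace Ω
  F_mono : ∀ s t : ℕ, s ≤ t → F s ≤ F t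
  F_zero : F 0 = ⊥
  F_top : F T = ⊤
  P : Ω → ℝ
  P_pos : ∀ ω, 0 < P ω
  P_sum : ∑ ω, P ω = 1
  pi : ℕ → Fin d → Fin d → Ω → ℝ
  pi_pos : ∀ t, t ≤ T → ∀ i j ω, 0 < pi t i j ω
  pi_one : ∀ t, t ≤ T → ∀ i ω, pi t i i ω = 1
  pi_meas : ∀ t, t ≤ T → ∀ i j, Measurable[F t] (pi t i j)

variable [Fintype Ω] {d T : ℕ}

/-- The solvency cone `K_t(ω)`. -/
def Market.cone (M : Market Ω d T) (t : ℕ) (ω : Ω) : Set (Fin d → ℝ) :=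
  solvencyCone (fun i j => M.pi t i j ω)

/-- Self-financing (predictable) trading strategy. -/
def Market.SelfFinancing (M : Market Ω d T) (y : ℕ → Ω → Fin d → ℝ) : Prop :=
  Measurable[M.F 0] (y 0) ∧ (∀ t, t < T → Measurable[M.F t] (y (t + 1))) ∧
  ∀ t, t < T → ∀ ω, y t ω - y (t + 1) ω ∈ M.cone t ω

/-- Absence of arbitrage. -/
def Market.NoArbitrage (M : Market Ω d T) : Prop :=
  ¬∃ y : ℕ → Ω → Fin d → ℝ, M.SelfFinancing y ∧ (∀ ω, y 0 ω = 0) ∧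
    ∃ x : Ω → Fin d → ℝ, (∀ ω i, 0 ≤ x ω i) ∧ x ≠ 0 ∧ ∀ ω, y T ω - x ω ∈ M.cone T ω

/-- An equivalent martingale pair `(ℙ,S)` with `S_t ∈ K*_t \ {0}`. -/
def MartingalePair (M : Market Ω d T) (p : Ω → ℝ) (S : ℕ → Ω → Fin d → ℝ) : Prop :=
  (∀ ω, 0 < p ω) ∧ (∑ ω, p ω = 1) ∧
  (∀ t, t ≤ T → Measurable[M.F t] (S t)) ∧
  (∀ t, t < T → ∀ A : Set Ω, MeasurableSet[M.F t] A →
    (∑ ω, A.indicator (fun ω' => p ω' • S (t + 1) ω') ω)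
      = ∑ ω, A.indicator (fun ω' => p ω' • S t ω') ω) ∧
  ∀ t ω, t ≤ T → S t ω ∈ posPolar (M.cone t ω) ∧ S t ω ≠ 0

/-- A `χ`-approximate martingale pair `(ℙ,S)`. -/
def ApproxPair (M : Market Ω d T) (χ : ℕ → Ω → ℝ) (p : Ω → ℝ)
    (S : ℕ → Ω → Fin d → ℝ) : Prop :=
  (∀ ω, 0 ≤ p ω) ∧ (∑ ω, p ω = 1) ∧
  (∀ t, t ≤ T → Measurable[M.F t] (S t)) ∧
  (∀ t ω, t ≤ T → S t ω ∈ posPolar (M.cone t ω) ∧ S t ω ≠ 0) ∧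
  ∀ t ω, t ≤ T →
    (∑ ω', (atomOf (M.F t) ω).indicator
      (fun ω'' => p ω'' • ∑ s ∈ Finset.Icc (t + 1) T, χ s ω'' • S s ω'') ω')
      ∈ posPolar (M.cone t ω)

/-- A `χ`-approximate martingale pair with `S^i ≡ 1`: membership of `P̄^i(χ)`. -/
def ApproxPairI (M : Market Ω d T) (χ : ℕ → Ω → ℝ) (i : Fin d) (p : Ω → ℝ)
    (S : ℕ → Ω → Fin d → ℝ) : Prop :=
  ApproxPair M χ p S ∧ ∀ t ω, t ≤ T → S t ω i = 1

/-- A `χ`-approximate equivalent martingale pair with `S^i ≡ 1`: membership of `P^i(χ)`. -/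
def EquivApproxPairI (M : Market Ω d T) (χ : ℕ → Ω → ℝ) (i : Fin d) (p : Ω → ℝ)
    (S : ℕ → Ω → Fin d → ℝ) : Prop :=
  ApproxPairI M χ i p S ∧ ∀ ω, 0 < p ω

/-- A game option `(Y,X,X')`. -/
def IsGameOption (M : Market Ω d T) (Y X X' : ℕ → Ω → Fin d → ℝ) : Prop :=
  (∀ t, t ≤ T → Measurable[M.F t] (Y t)) ∧ (∀ t, t ≤ T → Measurable[M.F t] (X t)) ∧
  (∀ t, t ≤ T → Measurable[M.F t] (X' t)) ∧
  ∀ t ω, t ≤ T → X t ω - X' t ω ∈ M.cone t ω ∧ X' t ω - Y t ω ∈ M.cone t ω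

/-- `(σ,y)` hedges the game option `(Y,X,X')` for the seller:
`y_{σ∧τ} − Q_{στ} ∈ K_{σ∧τ}` for all stopping times `τ`. -/
def HedgesSeller (M : Market Ω d T) (Y X X' : ℕ → Ω → Fin d → ℝ) (σ : Ω → ℕ)
    (y : ℕ → Ω → Fin d → ℝ) : Prop :=
  ∀ τ, IsStoppingTime M.F T τ → ∀ ω,
    y (min (σ ω) (τ ω)) ω - payoffQ Y X X' (σ ω) (τ ω) ω ∈ M.cone (min (σ ω) (τ ω)) ω

/-- `(τ,y)` hedges the game option `(Y,X,X')` for the buyer: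
`y_{σ∧τ} + Q_{στ} ∈ K_{σ∧τ}` for all stopping times `σ`. -/
def HedgesBuyer (M : Market Ω d T) (Y X X' : ℕ → Ω → Fin d → ℝ) (τ : Ω → ℕ)
    (y : ℕ → Ω → Fin d → ℝ) : Prop :=
  ∀ σ, IsStoppingTime M.F T σ → ∀ ω,
    y (min (σ ω) (τ ω)) ω + payoffQ Y X X' (σ ω) (τ ω) ω ∈ M.cone (min (σ ω) (τ ω)) ω

/-- The seller's sets `Z^a_t` (pointwise at each `ω`), by backward induction:
`Z^a_T = X'_T + K_T` and
`Z^a_t = ((Z^a_{t+1} ∩ L_t) + K_t) ∩ (Y_t + K_t) ∪ (X_t + K_t)` for `t < T`. -/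
def Za (M : Market Ω d T) (Y X X' : ℕ → Ω → Fin d → ℝ) (t : ℕ) (ω : Ω) :
    Set (Fin d → ℝ) :=
  if T ≤ t then {v | v - X' T ω ∈ M.cone T ω}
  else (({v : Fin d → ℝ | ∀ ω' ∈ atomOf (M.F t) ω, v ∈ Za M Y X X' (t + 1) ω'}
          + M.cone t ω)
        ∩ {v | v - Y t ω ∈ M.cone t ω})
      ∪ {v | v - X t ω ∈ M.cone t ω}
termination_by T - t
decreasing_by omega

/-- The seller's set `Y^a_t = Y_t + K_t` (pointwise). -/
def YaSet (M : Market Ω d T) (Y : ℕ → Ω → Fin d → ℝ) (t : ℕ) (ω : Ω) :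
    Set (Fin d → ℝ) :=
  {v | v - Y t ω ∈ M.cone t ω}

/-- The seller's set `X^a_t` (pointwise): `X_t + K_t` for `t < T`, `X'_T + K_T` at `T`. -/
def XaSet (M : Market Ω d T) (X X' : ℕ → Ω → Fin d → ℝ) (t : ℕ) (ω : Ω) :
    Set (Fin d → ℝ) :=
  if T ≤ t then {v | v - X' T ω ∈ M.cone T ω} else {v | v - X t ω ∈ M.cone t ω}

/-- The seller's set `W^a_t = Z^a_{t+1} ∩ L_t` (pointwise: intersection over the atom). -/
def WaSet (M : Market Ω d T) (Y X X' : ℕ → Ω → Fin d → ℝ) (t : ℕ) (ω : Ω) :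
    Set (Fin d → ℝ) :=
  if T ≤ t then Set.univ
  else {v | ∀ ω' ∈ atomOf (M.F t) ω, v ∈ Za M Y X X' (t + 1) ω'}

/-- The seller's set `V^a_t = W^a_t + K_t` (pointwise). -/
def VaSet (M : Market Ω d T) (Y X X' : ℕ → Ω → Fin d → ℝ) (t : ℕ) (ω : Ω) :
    Set (Fin d → ℝ) :=
  if T ≤ t then Set.univ else WaSet M Y X X' t ω + M.cone t ω

/-- The ask (seller's) price of the game option in currency `i`. -/
def askPrice (M : Market Ω d T) (Y X X' : ℕ → Ω → Fin d → ℝ) (i : Fin d) : ℝ :=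
  sInf {z : ℝ | ∃ σ y, IsStoppingTime M.F T σ ∧ M.SelfFinancing y ∧
    HedgesSeller M Y X X' σ y ∧ y 0 = fun _ => z • eVec i}

/-- The bid (buyer's) price of the game option in currency `i`. -/
def bidPrice (M : Market Ω d T) (Y X X' : ℕ → Ω → Fin d → ℝ) (i : Fin d) : ℝ :=
  sSup {w : ℝ | ∃ z : ℝ, ∃ τ y, IsStoppingTime M.F T τ ∧ M.SelfFinancing y ∧
    HedgesBuyer M Y X X' τ y ∧ y 0 = (fun _ => z • eVec i) ∧ w = -z}

section AuxProof

variable {Ω' : Type*}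

lemma mem_atomOf_self (m : MeasurableSpace Ω') (ω : Ω') : ω ∈ atomOf m ω := fun _ _ h => h

lemma atomOf_symm {m : MeasurableSpace Ω'} {ω ω'' : Ω'} (h : ω'' ∈ atomOf m ω) :
    ω ∈ atomOf m ω'' := by
  intro A hA hω'
  by_contra hω
  exact h Aᶜ hA.compl hω hω'

lemma atomOf_trans {m : MeasurableSpace Ω'} {a b c : Ω'} (h1 : b ∈ atomOf m a)
    (h2 : c ∈ atomOf m b) : c ∈ atomOf m a := fun A hA ha => h2 A hA (h1 A hA ha)

lemma atomOf_eq {m : MeasurableSpace Ω'} {ω ω'' : Ω'} (h : ω'' ∈ atomOf m ω) :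
    atomOf m ω'' = atomOf m ω :=
  Set.ext fun x => ⟨fun hx => atomOf_trans h hx, fun hx => atomOf_trans (atomOf_symm h) hx⟩

lemma atomOf_mono {m m' : MeasurableSpace Ω'} (h : m ≤ m') (ω : Ω') :
    atomOf m' ω ⊆ atomOf m ω := fun ω'' hω'' A hA hω => hω'' A (h A hA) hω

lemma eq_on_atom {α : Type*} [MeasurableSpace α] [MeasurableSingletonClass α]
    {m : MeasurableSpace Ω'} {f : Ω' → α} (hf : Measurable[m] f) {ω ω'' : Ω'}
    (h : ω'' ∈ atomOf m ω) : f ω'' = f ω :=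
  h (f ⁻¹' {f ω}) (hf (measurableSet_singleton _)) rfl

lemma atomOf_measurableSet [Fintype Ω'] (m : MeasurableSpace Ω') (ω : Ω') :
    MeasurableSet[m] (atomOf m ω) := by
  have h : atomOf m ω = ⋂ A ∈ {A : Set Ω' | MeasurableSet[m] A ∧ ω ∈ A}, A := by
    ext x
    simp only [Set.mem_iInter, Set.mem_setOf_eq, atomOf]
    exact ⟨fun hx A hA => hx A hA.1 hA.2, fun hx A hA hω => hx A ⟨hA, hω⟩⟩
  rw [h]
  exact MeasurableSet.biInter (Set.to_countable _) fun A hA => hA.1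

lemma measurableSet_of_atoms [Fintype Ω'] {m : MeasurableSpace Ω'} {S : Set Ω'}
    (h : ∀ ω ∈ S, ∀ ω'' ∈ atomOf m ω, ω'' ∈ S) : MeasurableSet[m] S := by
  have hS : S = ⋃ ω ∈ S, atomOf m ω := by
    ext x
    constructor
    · intro hx; exact Set.mem_biUnion hx (mem_atomOf_self m x)
    · intro hx
      simp only [Set.mem_iUnion] at hx
      obtain ⟨ω, hω, hx⟩ := hx
      exact h ω hω x hx
  rw [hS]
  exact MeasurableSet.biUnion (Set.to_countable _) fun ω _ => atomOf_measurableSet m ω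

lemma measurable_of_atoms [Fintype Ω'] {m : MeasurableSpace Ω'} {α : Type*} [MeasurableSpace α]
    {f : Ω' → α} (h : ∀ ω ω'', ω'' ∈ atomOf m ω → f ω'' = f ω) : Measurable[m] f := by
  intro B _
  refine measurableSet_of_atoms fun ω hω ω'' hω'' => ?_
  show f ω'' ∈ B
  rw [h ω ω'' hω'']
  exact hω

lemma zero_mem_solvencyCone {d : ℕ} (π : Fin d → Fin d → ℝ) :
    (0 : Fin d → ℝ) ∈ solvencyCone π :=
  ⟨0, 0, fun _ => le_refl _, fun _ _ => le_refl _, by simp⟩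

lemma add_mem_solvencyCone {d : ℕ} {π : Fin d → Fin d → ℝ} {x y : Fin d → ℝ}
    (hx : x ∈ solvencyCone π) (hy : y ∈ solvencyCone π) : x + y ∈ solvencyCone π := by
  obtain ⟨a, b, ha, hb, hxe⟩ := hx
  obtain ⟨a', b', ha', hb', hye⟩ := hy
  refine ⟨a + a', fun i => b i + b' i, fun i => add_nonneg (ha i) (ha' i),
    fun i j => add_nonneg (hb i j) (hb' i j), ?_⟩
  subst hxe hye
  simp only [Pi.add_apply, add_smul, Finset.sum_add_distrib]
  abel

variable [Fintype Ω'] {d T : ℕ}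

lemma cone_const (M : Market Ω' d T) {t : ℕ} (ht : t ≤ T)
    {ω ω'' : Ω'} (h : ω'' ∈ atomOf (M.F t) ω) : M.cone t ω'' = M.cone t ω := by
  unfold Market.cone
  have hpi : ∀ i j, M.pi t i j ω'' = M.pi t i j ω := fun i j =>
    eq_on_atom (M.pi_meas t ht i j) h
  simp only [hpi]

open Classical in
/-- One step of the seller's hedging construction. -/
def pickNext (M : Market Ω' d T) (Y X X' : ℕ → Ω' → Fin d → ℝ) (t : ℕ) (A : Set Ω')
    (v : Fin d → ℝ) : Fin d → ℝ :=
  if h : ∃ w, (∀ ω'' ∈ A, w ∈ Za M Y X X' (t + 1) ω'') ∧ ∀ ω'' ∈ A, v - w ∈ M.cone t ω''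
  then h.choose else v

/-- The seller's hedging strategy constructed from an initial endowment `f ∈ Z^a_0`. -/
def strat (M : Market Ω' d T) (Y X X' : ℕ → Ω' → Fin d → ℝ) (f : Ω' → Fin d → ℝ) :
    ℕ → Ω' → Fin d → ℝ
  | 0 => f
  | t + 1 => fun ω => pickNext M Y X X' t (atomOf (M.F t) ω) (strat M Y X X' f t ω)

/-- The stopping predicate for the seller's optimal exercise time. -/
def sigmaP (M : Market Ω' d T) (Y X X' : ℕ → Ω' → Fin d → ℝ) (f : Ω' → Fin d → ℝ)
    (ω : Ω') (t : ℕ) : Prop :=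
  t = T ∨ strat M Y X X' f t ω ∉ VaSet M Y X X' t ω ∩ YaSet M Y t ω

lemma sigmaP_exists (M : Market Ω' d T) (Y X X' : ℕ → Ω' → Fin d → ℝ)
    (f : Ω' → Fin d → ℝ) (ω : Ω') : ∃ t, sigmaP M Y X X' f ω t := ⟨T, Or.inl rfl⟩

open Classical in
/-- The seller's exercise time. -/
def sigmaOf (M : Market Ω' d T) (Y X X' : ℕ → Ω' → Fin d → ℝ) (f : Ω' → Fin d → ℝ)
    (ω : Ω') : ℕ :=
  @Nat.find (sigmaP M Y X X' f ω) (Classical.decPred _) (sigmaP_exists M Y X X' f ω)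

open Classical in
lemma sigmaOf_le_of (M : Market Ω' d T) (Y X X' : ℕ → Ω' → Fin d → ℝ)
    (f : Ω' → Fin d → ℝ) (ω : Ω') {t : ℕ} (h : sigmaP M Y X X' f ω t) :
    sigmaOf M Y X X' f ω ≤ t := Nat.find_le h

lemma sigmaOf_le (M : Market Ω' d T) (Y X X' : ℕ → Ω' → Fin d → ℝ)
    (f : Ω' → Fin d → ℝ) (ω : Ω') : sigmaOf M Y X X' f ω ≤ T :=
  sigmaOf_le_of M Y X X' f ω (Or.inl rfl)

open Classical in
lemma sigmaOf_spec (M : Market Ω' d T) (Y X X' : ℕ → Ω' → Fin d → ℝ)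
    (f : Ω' → Fin d → ℝ) (ω : Ω') : sigmaP M Y X X' f ω (sigmaOf M Y X X' f ω) :=
  Nat.find_spec (sigmaP_exists M Y X X' f ω)

open Classical in
lemma sigmaOf_min (M : Market Ω' d T) (Y X X' : ℕ → Ω' → Fin d → ℝ)
    (f : Ω' → Fin d → ℝ) (ω : Ω') {t : ℕ} (h : t < sigmaOf M Y X X' f ω) :
    t ≠ T ∧ strat M Y X X' f t ω ∈ VaSet M Y X X' t ω ∩ YaSet M Y t ω := by
  have hm := Nat.find_min (sigmaP_exists M Y X X' f ω) h
  unfold sigmaP at hm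
  push_neg at hm
  exact hm

lemma strat_const (M : Market Ω' d T) (Y X X' : ℕ → Ω' → Fin d → ℝ)
    {f : Ω' → Fin d → ℝ} (hf : Measurable[M.F 0] f) :
    ∀ t (ω ω'' : Ω'), ω'' ∈ atomOf (M.F t) ω →
      strat M Y X X' f (t + 1) ω'' = strat M Y X X' f (t + 1) ω ∧
      strat M Y X X' f t ω'' = strat M Y X X' f t ω := by
  intro t
  induction t with
  | zero =>
    intro ω ω'' h
    have h0 : f ω'' = f ω := eq_on_atom hf h
    constructor
    · show pickNext M Y X X' 0 (atomOf (M.F 0) ω'') (f ω'')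
        = pickNext M Y X X' 0 (atomOf (M.F 0) ω) (f ω)
      rw [atomOf_eq h, h0]
    · exact h0
  | succ s ih =>
    intro ω ω'' h
    have h' : ω'' ∈ atomOf (M.F s) ω := atomOf_mono (M.F_mono s (s + 1) (by omega)) ω h
    refine ⟨?_, (ih ω ω'' h').1⟩
    show pickNext M Y X X' (s + 1) (atomOf (M.F (s + 1)) ω'') (strat M Y X X' f (s + 1) ω'')
      = pickNext M Y X X' (s + 1) (atomOf (M.F (s + 1)) ω) (strat M Y X X' f (s + 1) ω)
    rw [atomOf_eq h, (ih ω ω'' h').1]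

lemma strat_const_le (M : Market Ω' d T) (Y X X' : ℕ → Ω' → Fin d → ℝ)
    {f : Ω' → Fin d → ℝ} (hf : Measurable[M.F 0] f) {s t : ℕ} (hst : s ≤ t)
    {ω ω'' : Ω'} (h : ω'' ∈ atomOf (M.F t) ω) :
    strat M Y X X' f s ω'' = strat M Y X X' f s ω :=
  (strat_const M Y X X' hf s ω ω'' (atomOf_mono (M.F_mono s t hst) ω h)).2

lemma strat_meas (M : Market Ω' d T) (Y X X' : ℕ → Ω' → Fin d → ℝ)
    {f : Ω' → Fin d → ℝ} (hf : Measurable[M.F 0] f) (t : ℕ) :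
    Measurable[M.F t] (strat M Y X X' f (t + 1)) :=
  measurable_of_atoms fun ω ω'' h => (strat_const M Y X X' hf t ω ω'' h).1

lemma strat_step (M : Market Ω' d T) (Y X X' : ℕ → Ω' → Fin d → ℝ)
    (f : Ω' → Fin d → ℝ) (t : ℕ) (ω : Ω') :
    strat M Y X X' f t ω - strat M Y X X' f (t + 1) ω ∈ M.cone t ω := by
  show strat M Y X X' f t ω
      - pickNext M Y X X' t (atomOf (M.F t) ω) (strat M Y X X' f t ω) ∈ M.cone t ω
  unfold pickNext
  split_ifs with h
  · exact h.choose_spec.2 ω (mem_atomOf_self _ _)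
  · rw [sub_self]
    exact zero_mem_solvencyCone _

lemma YaSet_const (M : Market Ω' d T) (Y : ℕ → Ω' → Fin d → ℝ) {t : ℕ} (ht : t ≤ T)
    (hY : Measurable[M.F t] (Y t)) {ω ω'' : Ω'} (h : ω'' ∈ atomOf (M.F t) ω) :
    YaSet M Y t ω'' = YaSet M Y t ω := by
  unfold YaSet
  rw [eq_on_atom hY h, cone_const M ht h]

lemma WaSet_const (M : Market Ω' d T) (Y X X' : ℕ → Ω' → Fin d → ℝ) {t : ℕ}
    {ω ω'' : Ω'} (h : ω'' ∈ atomOf (M.F t) ω) :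
    WaSet M Y X X' t ω'' = WaSet M Y X X' t ω := by
  unfold WaSet
  rw [atomOf_eq h]

lemma VaSet_const (M : Market Ω' d T) (Y X X' : ℕ → Ω' → Fin d → ℝ) {t : ℕ}
    {ω ω'' : Ω'} (h : ω'' ∈ atomOf (M.F t) ω) :
    VaSet M Y X X' t ω'' = VaSet M Y X X' t ω := by
  unfold VaSet
  by_cases hs : T ≤ t
  · rw [if_pos hs, if_pos hs]
  · rw [if_neg hs, if_neg hs, WaSet_const M Y X X' h,
      cone_const M (le_of_lt (lt_of_not_ge hs)) h]

lemma sigma_stopping (M : Market Ω' d T) (Y X X' : ℕ → Ω' → Fin d → ℝ)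
    (hY : ∀ t, t ≤ T → Measurable[M.F t] (Y t)) {f : Ω' → Fin d → ℝ}
    (hf : Measurable[M.F 0] f) : IsStoppingTime M.F T (sigmaOf M Y X X' f) := by
  refine ⟨fun ω => sigmaOf_le M Y X X' f ω, fun t => ?_⟩
  refine measurableSet_of_atoms fun ω hω ω'' hω'' => ?_
  have hω' : sigmaOf M Y X X' f ω ≤ t := hω
  set s := sigmaOf M Y X X' f ω with hs
  have hsT : s ≤ T := sigmaOf_le M Y X X' f ω
  have hmem : ω'' ∈ atomOf (M.F s) ω := atomOf_mono (M.F_mono s t hω') ω hω''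
  have hspec := sigmaOf_spec M Y X X' f ω
  have hP : sigmaP M Y X X' f ω'' s := by
    rcases hspec with hT | hnot
    · exact Or.inl hT
    · right
      rwa [strat_const_le M Y X X' hf hω' hω'', VaSet_const M Y X X' hmem,
        YaSet_const M Y (hsT) (hY s hsT) hmem]
  show sigmaOf M Y X X' f ω'' ≤ t
  exact le_trans (sigmaOf_le_of M Y X X' f ω'' hP) hω'

lemma const_stopping (F : ℕ → MeasurableSpace Ω') {c : ℕ} (hc : c ≤ T) :
    IsStoppingTime F T (fun _ => c) := by
  refine ⟨fun _ => hc, fun t => ?_⟩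
  have : {ω : Ω' | (fun _ => c) ω ≤ t} = if c ≤ t then Set.univ else ∅ := by
    split_ifs with h <;> ext ω <;> simp [h]
  rw [this]
  split_ifs
  · exact @MeasurableSet.univ Ω' (F t)
  · exact @MeasurableSet.empty Ω' (F t)

lemma strat_mem_Za (M : Market Ω' d T) (Y X X' : ℕ → Ω' → Fin d → ℝ)
    {f : Ω' → Fin d → ℝ} (hf0 : ∀ ω, f ω ∈ Za M Y X X' 0 ω) :
    ∀ t (ω : Ω'), t ≤ sigmaOf M Y X X' f ω → strat M Y X X' f t ω ∈ Za M Y X X' t ω := by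
  intro t
  induction t with
  | zero => exact fun ω _ => hf0 ω
  | succ t ih =>
    intro ω hσ
    have hlt : t < sigmaOf M Y X X' f ω := hσ
    have htT : t < T := by
      have := sigmaOf_le M Y X X' f ω
      have hne := (sigmaOf_min M Y X X' f ω hlt).1
      omega
    have hmem := (sigmaOf_min M Y X X' f ω hlt).2
    have hV : strat M Y X X' f t ω ∈ WaSet M Y X X' t ω + M.cone t ω := by
      have := hmem.1
      unfold VaSet at this
      rwa [if_neg (not_le.2 htT)] at this
    rw [Set.mem_add] at hV
    obtain ⟨w, hw, k, hk, hwk⟩ := hV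
    unfold WaSet at hw
    rw [if_neg (not_le.2 htT)] at hw
    have hcond : ∃ w', (∀ ω'' ∈ atomOf (M.F t) ω, w' ∈ Za M Y X X' (t + 1) ω'') ∧
        ∀ ω'' ∈ atomOf (M.F t) ω, strat M Y X X' f t ω - w' ∈ M.cone t ω'' := by
      refine ⟨w, hw, fun ω'' hω'' => ?_⟩
      rw [cone_const M (le_of_lt htT) hω'']
      have : strat M Y X X' f t ω - w = k := by rw [← hwk]; abel
      rw [this]
      exact hk
    show pickNext M Y X X' t (atomOf (M.F t) ω) (strat M Y X X' f t ω)
      ∈ Za M Y X X' (t + 1) ω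
    unfold pickNext
    rw [dif_pos hcond]
    exact hcond.choose_spec.1 ω (mem_atomOf_self _ _)

lemma strat_hedges (M : Market Ω' d T) (Y X X' : ℕ → Ω' → Fin d → ℝ)
    (hGO : IsGameOption M Y X X') {f : Ω' → Fin d → ℝ}
    (hf0 : ∀ ω, f ω ∈ Za M Y X X' 0 ω) :
    HedgesSeller M Y X X' (sigmaOf M Y X X' f) (strat M Y X X' f) := by
  intro τ hτ ω
  have hσT : sigmaOf M Y X X' f ω ≤ T := sigmaOf_le M Y X X' f ω
  have hτT : τ ω ≤ T := hτ.1 ω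
  set σω := sigmaOf M Y X X' f ω with hσdef
  have hX : σω < T → strat M Y X X' f σω ω - X σω ω ∈ M.cone σω ω := by
    intro hσlt
    have hinv := strat_mem_Za M Y X X' hf0 σω ω le_rfl
    rw [Za, if_neg (not_le.2 hσlt)] at hinv
    rcases hinv with hL | hR
    · exfalso
      rcases sigmaOf_spec M Y X X' f ω with hT | hnot
      · exact absurd hT (by omega)
      · refine hnot ⟨?_, hL.2⟩
        unfold VaSet WaSet
        rw [if_neg (not_le.2 hσlt), if_neg (not_le.2 hσlt)]
        exact hL.1
    · exact hR
  rcases lt_trichotomy (τ ω) σω with h | h | h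
  · have hmin : min σω (τ ω) = τ ω := min_eq_right h.le
    have hp : payoffQ Y X X' σω (τ ω) ω = Y (τ ω) ω := by
      unfold payoffQ
      rw [if_pos h]
    rw [hmin, hp]
    exact (sigmaOf_min M Y X X' f ω h).2.2
  · have hmin : min σω (τ ω) = σω := min_eq_left (le_of_eq h.symm)
    have hp : payoffQ Y X X' σω (τ ω) ω = X' σω ω := by
      unfold payoffQ
      rw [if_neg (by omega), if_neg (by omega)]
    rw [hmin, hp]
    by_cases hT : σω = T
    · have hinv := strat_mem_Za M Y X X' hf0 σω ω le_rfl
      rw [Za, if_pos (le_of_eq hT.symm)] at hinv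
      have h1 : X' T ω = X' σω ω := by rw [hT]
      have h2 : M.cone T ω = M.cone σω ω := by rw [hT]
      rw [h1, h2] at hinv
      exact hinv
    · have hσlt : σω < T := lt_of_le_of_ne hσT hT
      have h1 := hX hσlt
      have h2 := (hGO.2.2.2 σω ω hσT).1
      have := add_mem_solvencyCone h1 h2
      rwa [sub_add_sub_cancel] at this
  · have hmin : min σω (τ ω) = σω := min_eq_left h.le
    have hp : payoffQ Y X X' σω (τ ω) ω = X σω ω := by
      unfold payoffQ
      rw [if_neg (by omega), if_pos h]
    rw [hmin, hp]
    exact hX (by omega)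

end AuxProof

/-- **Proposition 3.4.** The set `Z^a_0` produced by the seller's backward construction
(as a set of `F_0`-measurable random variables) equals the set of initial endowments of
hedging strategies for the seller. -/
theorem Za_zero_eq_hedging_endowments {Ω : Type*} [Fintype Ω] {d T : ℕ}
    (M : Market Ω d T) (Y X X' : ℕ → Ω → Fin d → ℝ) (hGO : IsGameOption M Y X X') :
    {f : Ω → Fin d → ℝ | Measurable[M.F 0] f ∧ ∀ ω, f ω ∈ Za M Y X X' 0 ω}
      = {f : Ω → Fin d → ℝ | ∃ σ y, IsStoppingTime M.F T σ ∧ M.SelfFinancing y ∧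
          HedgesSeller M Y X X' σ y ∧ y 0 = f} := by
  ext f
  simp only [Set.mem_setOf_eq]
  constructor
  · rintro ⟨hf, hf0⟩
    refine ⟨sigmaOf M Y X X' f, strat M Y X X' f,
      sigma_stopping M Y X X' hGO.1 hf, ?_, strat_hedges M Y X X' hGO hf0, rfl⟩
    exact ⟨hf, fun t _ => strat_meas M Y X X' hf t, fun t _ ω => strat_step M Y X X' f t ω⟩
  · rintro ⟨σ, y, hσ, hSF, hH, rfl⟩
    refine ⟨hSF.1, fun ω => ?_⟩
    -- downward induction
    have key : ∀ k t, t + k = T → ∀ ω, t ≤ σ ω → y t ω ∈ Za M Y X X' t ω := by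
      intro k
      induction k with
      | zero =>
        intro t ht ω hσω
        have htT : t = T := by omega
        subst htT
        have hσT : σ ω = t := le_antisymm (hσ.1 ω) hσω
        have hh := hH (fun _ => t) (const_stopping M.F le_rfl) ω
        have hmin : min (σ ω) ((fun _ => t) ω) = t := by simp [hσT]
        have hp : payoffQ Y X X' (σ ω) ((fun _ => t) ω) ω = X' t ω := by
          unfold payoffQ
          rw [if_neg (by simp only []; omega), if_neg (by simp only []; omega), hσT]
        rw [hmin, hp] at hh
        rw [Za, if_pos le_rfl]
        exact hh
      | succ k ih =>
        intro t ht ω hσω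
        have htT : t < T := by omega
        rw [Za, if_neg (not_le.2 htT)]
        rcases eq_or_lt_of_le hσω with heq | hlt
        · -- σ ω = t : exercise now, use τ ≡ T
          right
          have hh := hH (fun _ => T) (const_stopping M.F le_rfl) ω
          have hσle : σ ω ≤ T := hσ.1 ω
          have hmin : min (σ ω) ((fun _ => T) ω) = t := by
            simp only []
            omega
          have hp : payoffQ Y X X' (σ ω) ((fun _ => T) ω) ω = X t ω := by
            unfold payoffQ
            rw [if_neg (by simp only []; omega), if_pos (by simp only []; omega), ← heq]
          rw [hmin, hp] at hh
          exact hh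
        · left
          constructor
          · -- membership in W + K
            rw [Set.mem_add]
            refine ⟨y (t + 1) ω, ?_, y t ω - y (t + 1) ω, hSF.2.2 t htT ω, by abel⟩
            intro ω'' hω''
            have hσ'' : t + 1 ≤ σ ω'' := by
              have hms : MeasurableSet[M.F t] {ω' | σ ω' ≤ t}ᶜ := (hσ.2 t).compl
              have : ω'' ∈ {ω' | σ ω' ≤ t}ᶜ := hω'' _ hms (by
                simp only [Set.mem_compl_iff, Set.mem_setOf_eq, not_le]
                exact hlt)
              simp only [Set.mem_compl_iff, Set.mem_setOf_eq, not_le] at this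
              omega
            have hconst : y (t + 1) ω = y (t + 1) ω'' :=
              (eq_on_atom (hSF.2.1 t htT) hω'').symm
            rw [hconst]
            exact ih (t + 1) (by omega) ω'' hσ''
          · -- membership in Y + K
            have hh := hH (fun _ => t) (const_stopping M.F (by omega)) ω
            have hmin : min (σ ω) ((fun _ => t) ω) = t := min_eq_right (by simp only []; omega)
            have hp : payoffQ Y X X' (σ ω) ((fun _ => t) ω) ω = Y t ω := by
              unfold payoffQ
              rw [if_pos hlt]
            rw [hmin, hp] at hh
            exact hh
    exact key T 0 (by omega) ω (Nat.zero_le _)
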